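/- arXiv:2007.04166 — 5 statements merged into one kernel-verified Lean document; each statement's English description precedes it below -/
import Mathlib

section
/- Let σ : ℝ → ℝ be continuous and such that its restrictions are dense in C(K) for every compact K ⊂ ℝ^d (i.e., H_σ is dense in C(K) in sup norm for every compact K). Then for every f ∈ L^1_{loc}(ℝ^d) and every ε > 0 there exists g ∈ H_σ with d(f, g) < ε, where d(f, g) := Σ_{k=1}^∞ 2^{−k} ‖(f−g)·1_{[−k,k]^d}‖_1 / (1 + ‖(f−g)·1_{[−k,k]^d}‖_1). -/
open MeasureTheory

/-- A shallow neural network on `ℝ^d` with activation function `σ`. -/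
def IsNN {d : ℕ} (σ : ℝ → ℝ) (g : (Fin d → ℝ) → ℝ) : Prop :=
  ∃ (M : ℕ) (α b : Fin M → ℝ) (w : Fin M → Fin d → ℝ),
    ∀ x, g x = ∑ j, α j * σ ((∑ i, w j i * x i) + b j)

/-- The centered cube `[−k, k]^d` in `ℝ^d`. -/
def cube (d k : ℕ) : Set (Fin d → ℝ) := {x | ∀ i, |x i| ≤ (k : ℝ)}

/-- The metric `d(f,g) = Σ_{k≥1} 2^{−k} ‖(f−g)1_{[−k,k]^d}‖₁ / (1 + ‖(f−g)1_{[−k,k]^d}‖₁)`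
on `L¹_loc(ℝ^d)`. -/
noncomputable def locMetric {d : ℕ} (f g : (Fin d → ℝ) → ℝ) : ℝ :=
  ∑' k : ℕ, (2 : ℝ)⁻¹ ^ (k + 1) *
    ((∫ x in cube d (k + 1), |f x - g x|) / (1 + ∫ x in cube d (k + 1), |f x - g x|))

/-!
Fix `N` with `2⁻ᴺ < ε / 2`. On the cube `K = [-N, N]^d`, approximate `f` in `L¹` first by a
continuous function (density of `C_c` in `L¹` of the regular finite measure `volume|_K`) and then
uniformly by a network; a uniform error `η` costs at most `η · vol K` in `L¹`. As the cubes are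
nested, the terms `k < N` of the series defining `locMetric` are each at most that `L¹` error times
`2⁻ᵏ⁻¹`, and the remaining terms sum to at most `2⁻ᴺ`.
-/

section Approximation

variable {X E : Type*} [TopologicalSpace X] [MeasurableSpace X] [BorelSpace X] [NormalSpace X]
  [R1Space X] [WeaklyLocallyCompactSpace X] [NormedAddCommGroup E] [NormedSpace ℝ E]
  {μ : Measure X} [μ.Regular] {K : Set X}

theorem IntegrableOn.exists_continuous_setIntegral_norm_sub_le {f : X → E}
    (hf : IntegrableOn f K μ) (hK : μ K ≠ ⊤) {ε : ℝ} (hε : 0 < ε) :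
    ∃ h : X → E, Continuous h ∧ ∫ x in K, ‖f x - h x‖ ∂μ ≤ ε := by
  have := Measure.Regular.restrict_of_measure_ne_top hK
  obtain ⟨h, -, hfh, hh, -⟩ := Integrable.exists_hasCompactSupport_integral_sub_le hf hε
  exact ⟨h, hh, hfh⟩

end Approximation

theorem tsum_inv_two_pow_mul_div_one_add_le {a : ℕ → ℝ} (ha : ∀ k, 0 ≤ a k) {δ : ℝ}
    (hδ : 0 ≤ δ) {N : ℕ} (haN : ∀ k < N, a k ≤ δ) :
    ∑' k, (2 : ℝ)⁻¹ ^ (k + 1) * (a k / (1 + a k)) ≤ δ + 2⁻¹ ^ N := by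
  have hbound : ∀ k, (2 : ℝ)⁻¹ ^ (k + 1) * (a k / (1 + a k)) ≤
      (2⁻¹ ^ k * δ + if N ≤ k then 2⁻¹ ^ k else 0) * 2⁻¹ := by
    intro k
    have hpos : (0 : ℝ) < 2⁻¹ ^ k := by positivity
    have hr0 : 0 ≤ a k / (1 + a k) := div_nonneg (ha k) (by linarith [ha k])
    have hr1 : a k / (1 + a k) ≤ 1 := div_le_one_of_le₀ (by linarith) (by linarith [ha k])
    rw [pow_succ]
    split_ifs with hk
    · nlinarith
    · have : a k / (1 + a k) ≤ δ := (div_le_self (ha k) (by linarith [ha k])).trans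
        (haN k (not_le.mp hk))
      nlinarith
  have hgeo : Summable fun k : ℕ => (2 : ℝ)⁻¹ ^ k :=
    summable_geometric_of_lt_one (by norm_num) (by norm_num)
  have htail : Summable fun k : ℕ => if N ≤ k then (2 : ℝ)⁻¹ ^ k else 0 :=
    hgeo.of_nonneg_of_le (fun k => by split_ifs <;> positivity)
      (fun k => by split_ifs <;> first | exact le_rfl | positivity)
  have hb : Summable fun k => ((2 : ℝ)⁻¹ ^ k * δ + if N ≤ k then 2⁻¹ ^ k else 0) * 2⁻¹ :=
    ((hgeo.mul_right δ).add htail).mul_right _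
  calc ∑' k, (2 : ℝ)⁻¹ ^ (k + 1) * (a k / (1 + a k))
      ≤ ∑' k, ((2 : ℝ)⁻¹ ^ k * δ + if N ≤ k then 2⁻¹ ^ k else 0) * 2⁻¹ :=
        Summable.tsum_le_tsum hbound (hb.of_nonneg_of_le
          (fun k => mul_nonneg (by positivity) (div_nonneg (ha k) (by linarith [ha k]))) hbound) hb
    _ = δ + 2⁻¹ ^ N := by
        rw [tsum_mul_right, Summable.tsum_add (hgeo.mul_right δ) htail, tsum_mul_right,
          tsum_geometric_inv_two, tsum_geometric_inv_two_ge]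
        ring

theorem cube_eq_Icc (d k : ℕ) : cube d k = Set.Icc (fun _ => -(k : ℝ)) fun _ => (k : ℝ) := by
  ext x
  simp [cube, Pi.le_def, abs_le, forall_and]

theorem isCompact_cube (d k : ℕ) : IsCompact (cube d k) :=
  cube_eq_Icc d k ▸ isCompact_Icc

theorem cube_mono {d a b : ℕ} (h : a ≤ b) : cube d a ⊆ cube d b :=
  fun _ hx i => (hx i).trans (Nat.cast_le.mpr h)

theorem locMetric_le_setIntegral_cube_add {d N : ℕ} {f g : (Fin d → ℝ) → ℝ}
    (hfg : IntegrableOn (fun x => |f x - g x|) (cube d N)) :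
    locMetric f g ≤ (∫ x in cube d N, |f x - g x|) + 2⁻¹ ^ N :=
  tsum_inv_two_pow_mul_div_one_add_le (fun _ => integral_nonneg fun _ => abs_nonneg _)
    (integral_nonneg fun _ => abs_nonneg _) fun _ hk =>
      setIntegral_mono_set hfg (.of_forall fun _ => abs_nonneg _) (cube_mono hk).eventuallyLE

theorem IsNN.continuous {d : ℕ} {σ : ℝ → ℝ} (hσ : Continuous σ) {g : (Fin d → ℝ) → ℝ}
    (hg : IsNN σ g) : Continuous g := by
  obtain ⟨M, α, b, w, hg⟩ := hg
  rw [funext hg]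
  fun_prop

theorem exists_isNN_setIntegral_abs_sub_lt {d : ℕ} {σ : ℝ → ℝ} (hσ : Continuous σ)
    {K : Set (Fin d → ℝ)} (hK : IsCompact K)
    (hdense : ∀ h : (Fin d → ℝ) → ℝ, Continuous h → ∀ η : ℝ, 0 < η →
      ∃ g, IsNN σ g ∧ ∀ x ∈ K, |h x - g x| < η)
    {f : (Fin d → ℝ) → ℝ} (hfK : IntegrableOn f K) {ε : ℝ} (hε : 0 < ε) :
    ∃ g, IsNN σ g ∧ ∫ x in K, |f x - g x| < ε := by
  obtain ⟨h, hh, hfh⟩ :=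
    IntegrableOn.exists_continuous_setIntegral_norm_sub_le hfK hK.measure_ne_top (half_pos hε)
  -- the `+ 1` keeps `η` positive when `K` is null
  set η := ε / 2 / (volume.real K + 1)
  obtain ⟨g, hg, hhg⟩ := hdense h hh η (by positivity)
  refine ⟨g, hg, ?_⟩
  have hhK := hh.continuousOn.integrableOn_compact (μ := volume) hK
  have hgK := (hg.continuous hσ).continuousOn.integrableOn_compact (μ := volume) hK
  have hfh_int : IntegrableOn (fun x => |f x - h x|) K := (hfK.sub hhK).abs
  have hhg_int : IntegrableOn (fun x => |h x - g x|) K := (hhK.sub hgK).abs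
  have hhg_le : ∫ x in K, |h x - g x| ≤ η * volume.real K := by
    have := norm_setIntegral_le_of_norm_le_const (μ := volume) (f := fun x => |h x - g x|)
      hK.measure_lt_top fun x hx => by simpa using (hhg x hx).le
    exact (le_abs_self _).trans (by simpa using this)
  have hη : η * volume.real K < ε / 2 := by
    rw [div_mul_eq_mul_div, div_lt_iff₀ (by positivity)]
    nlinarith [hε, measureReal_nonneg (μ := volume) (s := K)]
  calc ∫ x in K, |f x - g x| ≤ ∫ x in K, (|f x - h x| + |h x - g x|) :=
        setIntegral_mono_on (hfK.sub hgK).abs (hfh_int.add hhg_int) hK.measurableSet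
          fun x _ => abs_sub_le _ _ _
    _ = (∫ x in K, |f x - h x|) + ∫ x in K, |h x - g x| := integral_add hfh_int hhg_int
    _ < ε := by simp only [Real.norm_eq_abs] at hfh; linarith

/-- if `H_σ` is dense in `C(K)` (sup norm) for every compact `K ⊂ ℝ^d`, then
every locally integrable `f` can be approximated by shallow networks in the metric of
`L¹_loc(ℝ^d)`. -/
theorem stmt6 {d : ℕ} (σ : ℝ → ℝ) (hσc : Continuous σ)
    (hdense : ∀ K : Set (Fin d → ℝ), IsCompact K →
      ∀ f : (Fin d → ℝ) → ℝ, Continuous f → ∀ ε : ℝ, 0 < ε →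
        ∃ g, IsNN σ g ∧ ∀ x ∈ K, |f x - g x| < ε)
    (f : (Fin d → ℝ) → ℝ) (hf : LocallyIntegrable f volume)
    (ε : ℝ) (hε : 0 < ε) :
    ∃ g, IsNN σ g ∧ locMetric f g < ε := by
  obtain ⟨N, hN⟩ := exists_pow_lt_of_lt_one (half_pos hε) (by norm_num : (2 : ℝ)⁻¹ < 1)
  have hK := isCompact_cube d N
  have hfK := hf.integrableOn_isCompact hK
  obtain ⟨g, hg, hfg⟩ :=
    exists_isNN_setIntegral_abs_sub_lt hσc hK (hdense _ hK) hfK (half_pos hε)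
  refine ⟨g, hg, ?_⟩
  have hfg_int : IntegrableOn (fun x => |f x - g x|) (cube d N) :=
    (hfK.sub ((hg.continuous hσc).continuousOn.integrableOn_compact hK)).abs
  linarith [locMetric_le_setIntegral_cube_add hfg_int]
end

section
/- Let p : ℕ → [1,∞) be an exponent function. Then ℓ^{p(·)} = ℓ^∞ as sets (every bounded sequence lies in ℓ^{p(·)}) if and only if ‖1_ℕ‖_{p(·)} < ∞, i.e. there exists λ > 0 with Σ_{j=1}^∞ λ^{−p(j)} ≤ 1. -/
/-!
A sequence has finite Luxemburg norm iff some dilate `λ` makes its modular at most `1`.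
The constant sequence `1` is bounded, which gives one direction. Conversely, if `|x j| ≤ c`
then, since every `p j` is nonnegative, the modular of `x` at `c λ` is dominated termwise by
that of `1` at `λ`, which is `Σ_j λ^{-p(j)}`.
-/

open ENNReal

/-- The Luxemburg norm of the variable sequence space `ℓ^{p(·)}`, valued in `ℝ≥0∞`. -/
noncomputable def seqNorm (p x : ℕ → ℝ) : ℝ≥0∞ :=
  sInf (ENNReal.ofReal '' {l : ℝ | 0 < l ∧
    ∑' j : ℕ, ENNReal.ofReal ((|x j| / l) ^ (p j)) ≤ 1})

/-- The modular `ρ_{p(·)}(x / l)` from the definition of the Luxemburg norm. -/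
noncomputable def seqModular (p x : ℕ → ℝ) (l : ℝ) : ℝ≥0∞ :=
  ∑' j : ℕ, ENNReal.ofReal ((|x j| / l) ^ (p j))

theorem seqNorm_lt_top_iff {p x : ℕ → ℝ} :
    seqNorm p x < ⊤ ↔ ∃ l : ℝ, 0 < l ∧ seqModular p x l ≤ 1 := by
  rw [seqNorm, sInf_lt_iff]
  constructor
  · rintro ⟨_, ⟨l, hl, rfl⟩, -⟩
    exact ⟨l, hl⟩
  · rintro ⟨l, hl⟩
    exact ⟨_, ⟨l, hl, rfl⟩, ofReal_lt_top⟩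

theorem seqModular_one {p : ℕ → ℝ} {l : ℝ} (hl : 0 ≤ l) :
    seqModular p 1 l = ∑' j : ℕ, ENNReal.ofReal (l ^ (-(p j))) := by
  simp only [seqModular, Pi.one_apply, abs_one, one_div, Real.inv_rpow hl, Real.rpow_neg hl]

theorem seqModular_le_of_abs_le {p x : ℕ → ℝ} {c l : ℝ} (hp : ∀ j, 0 ≤ p j) (hc : 0 < c)
    (hl : 0 < l) (hx : ∀ j, |x j| ≤ c) : seqModular p x (c * l) ≤ seqModular p 1 l := by
  refine ENNReal.tsum_le_tsum fun j => ENNReal.ofReal_le_ofReal ?_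
  have hxj : |x j| / (c * l) ≤ |(1 : ℕ → ℝ) j| / l :=
    calc |x j| / (c * l) ≤ c / (c * l) := by gcongr; exact hx j
      _ = |(1 : ℕ → ℝ) j| / l := by field_simp; simp
  exact Real.rpow_le_rpow (by positivity) hxj (hp j)

/-- `ℓ^{p(·)} = ℓ^∞` as sets (i.e. every bounded sequence lies in `ℓ^{p(·)}`,
the converse inclusion always holding) if and only if `‖1_ℕ‖_{p(·)} < ∞`, i.e. there is
`λ > 0` with `Σ_j λ^{−p(j)} ≤ 1`. -/
theorem stmt13 (p : ℕ → ℝ) (hp : ∀ j, 1 ≤ p j) :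
    (∀ x : ℕ → ℝ, (∃ C : ℝ, ∀ j, |x j| ≤ C) → seqNorm p x < ⊤) ↔
      ∃ l : ℝ, 0 < l ∧ ∑' j : ℕ, ENNReal.ofReal (l ^ (-(p j))) ≤ 1 := by
  constructor
  · intro h
    obtain ⟨l, hl, h1⟩ := seqNorm_lt_top_iff.1 (h 1 ⟨1, by simp⟩)
    exact ⟨l, hl, seqModular_one hl.le ▸ h1⟩
  · rintro ⟨l, hl, hsum⟩ x ⟨C, hC⟩
    have hc : 0 < max C 1 := lt_max_of_lt_right one_pos
    refine seqNorm_lt_top_iff.2 ⟨max C 1 * l, mul_pos hc hl, ?_⟩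
    calc seqModular p x (max C 1 * l)
        ≤ seqModular p 1 l :=
          seqModular_le_of_abs_le (fun j => zero_le_one.trans (hp j)) hc hl
            fun j => (hC j).trans (le_max_left C 1)
      _ ≤ 1 := (seqModular_one hl.le).trans_le hsum
end

section
/- Let p : ℕ → [1,∞) be an exponent function with ‖1_ℕ‖_{p(·)} < ∞, and let σ : ℝ → ℝ be bounded, sigmoidal and non-constant. Let H_σ be the set of sequences k ↦ Σ_{j=1}^M α_j σ(w_j k + b_j). Then the closure of H_σ in the ‖·‖_{p(·)} norm equals c, the space of convergent real sequences. -/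
/-!
Approximation in `‖·‖_{p(·)}` is the same as uniform approximation: the `p(·)`-norm dominates
the sup norm, and is dominated by `‖1_ℕ‖_{p(·)}` times the sup norm. So it suffices
to identify the uniform closure of `H_σ`, a linear subspace of `ℕ → ℝ`. Every element of `H_σ`
converges, and convergence survives uniform limits. Conversely, as `w → ∞` the neuron
`k ↦ σ (w (k - j) + b)` tends uniformly to the profile equal to `σ(−∞)` before `j`, `σ b` at `j`
and `σ(+∞)` after `j`; the difference of two such profiles with `σ b ≠ σ b'` is a multiple of the
unit sequence `e_j`. Constants lie in `H_σ`, so the uniform closure contains every eventually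
constant sequence, hence every convergent one.
-/

open ENNReal Filter

/-- A sequence obtained from a shallow neural network with activation `σ`. -/
def IsNNSeq (σ : ℝ → ℝ) (y : ℕ → ℝ) : Prop :=
  ∃ (M : ℕ) (α w b : Fin M → ℝ), ∀ k : ℕ, y k = ∑ j, α j * σ (w j * (k : ℝ) + b j)

/-- A sigmoidal activation function: finite limits at `+∞` and `−∞`. -/
def Sigmoidal (σ : ℝ → ℝ) : Prop :=
  ∃ cp cm : ℝ, Tendsto σ atTop (nhds cp) ∧ Tendsto σ atBot (nhds cm)

open Topology

section UniformClosure

variable {ι : Type*}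

def Submodule.uniformClosure (S : Submodule ℝ (ι → ℝ)) : Submodule ℝ (ι → ℝ) where
  carrier := {x | ∀ ε > 0, ∃ y ∈ S, ∀ i, |x i - y i| ≤ ε}
  zero_mem' ε hε := ⟨0, S.zero_mem, fun i => by simpa using hε.le⟩
  add_mem' {x x'} hx hx' ε hε := by
    obtain ⟨y, hyS, hy⟩ := hx (ε / 2) (by positivity)
    obtain ⟨y', hy'S, hy'⟩ := hx' (ε / 2) (by positivity)
    refine ⟨y + y', S.add_mem hyS hy'S, fun i => ?_⟩
    calc |(x + x') i - (y + y') i| = |(x i - y i) + (x' i - y' i)| := by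
          rw [Pi.add_apply, Pi.add_apply, add_sub_add_comm]
      _ ≤ |x i - y i| + |x' i - y' i| := abs_add_le _ _
      _ ≤ ε := by linarith [hy i, hy' i]
  smul_mem' c x hx ε hε := by
    obtain ⟨y, hyS, hy⟩ := hx (ε / (|c| + 1)) (by positivity)
    refine ⟨c • y, S.smul_mem c hyS, fun i => ?_⟩
    calc |(c • x) i - (c • y) i| = |c| * |x i - y i| := by
          simp only [Pi.smul_apply, smul_eq_mul, ← mul_sub, abs_mul]
      _ ≤ (|c| + 1) * (ε / (|c| + 1)) := by gcongr; exacts [by linarith, hy i]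
      _ = ε := by field_simp

variable {S : Submodule ℝ (ι → ℝ)} {x : ι → ℝ}

theorem Submodule.le_uniformClosure : S ≤ S.uniformClosure :=
  fun y hy _ hε => ⟨y, hy, fun i => by simpa using hε.le⟩

theorem Submodule.mem_uniformClosure_of_forall_approx
    (h : ∀ ε > 0, ∃ z ∈ S.uniformClosure, ∀ i, |x i - z i| ≤ ε) : x ∈ S.uniformClosure := by
  intro ε hε
  obtain ⟨z, hz, hxz⟩ := h (ε / 2) (by positivity)
  obtain ⟨y, hyS, hzy⟩ := hz (ε / 2) (by positivity)
  refine ⟨y, hyS, fun i => ?_⟩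
  calc |x i - y i| ≤ |x i - z i| + |z i - y i| := abs_sub_le _ _ _
    _ ≤ ε := by linarith [hxz i, hzy i]

end UniformClosure

theorem exists_tendsto_of_forall_approx {x : ℕ → ℝ}
    (h : ∀ ε > 0, ∃ y : ℕ → ℝ, (∃ L, Tendsto y atTop (𝓝 L)) ∧ ∀ k, |x k - y k| ≤ ε) :
    ∃ L, Tendsto x atTop (𝓝 L) := by
  refine cauchySeq_tendsto_of_complete (Metric.cauchySeq_iff'.2 fun ε hε => ?_)
  obtain ⟨y, ⟨L, hy⟩, hxy⟩ := h (ε / 4) (by positivity)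
  obtain ⟨N, hN⟩ := Metric.cauchySeq_iff'.1 hy.cauchySeq (ε / 4) (by positivity)
  refine ⟨N, fun n hn => ?_⟩
  calc dist (x n) (x N) ≤ dist (x n) (y n) + dist (y n) (y N) + dist (y N) (x N) :=
        dist_triangle4 _ _ _ _
    _ < ε := by
        rw [Real.dist_eq, Real.dist_eq (y N), abs_sub_comm (y N)]
        linarith [hxy n, hxy N, hN n hn]

section SeqNorm

variable {p z : ℕ → ℝ}

theorem ofReal_abs_le_seqNorm {k : ℕ} (hpk : 0 < p k) :
    ENNReal.ofReal |z k| ≤ seqNorm p z := by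
  refine le_sInf ?_
  rintro _ ⟨l, ⟨hl, hsum⟩, rfl⟩
  refine ENNReal.ofReal_le_ofReal ((div_le_one hl).1 (not_lt.1 fun hlt => ?_))
  have hterm : (|z k| / l) ^ p k ≤ 1 :=
    ENNReal.ofReal_le_one.1 ((ENNReal.le_tsum k).trans hsum)
  exact (Real.one_lt_rpow hlt hpk).not_ge hterm

theorem abs_lt_of_seqNorm_lt (hp : ∀ j, 0 < p j) {ε : ℝ}
    (h : seqNorm p z < ENNReal.ofReal ε) (k : ℕ) : |z k| < ε :=
  (ENNReal.ofReal_lt_ofReal_iff_of_nonneg (abs_nonneg _)).1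
    ((ofReal_abs_le_seqNorm (hp k)).trans_lt h)

theorem exists_seqNorm_lt_of_abs_le (hp : ∀ j, 0 ≤ p j)
    (hone : seqNorm p (fun _ => 1) < ⊤) {ε : ℝ} (hε : 0 < ε) :
    ∃ δ > 0, ∀ z : ℕ → ℝ, (∀ k, |z k| ≤ δ) → seqNorm p z < ENNReal.ofReal ε := by
  obtain ⟨_, ⟨l, ⟨hl, hsum⟩, rfl⟩, -⟩ := sInf_lt_iff.1 hone
  refine ⟨ε / (2 * l), by positivity, fun z hz => ?_⟩
  calc seqNorm p z ≤ ENNReal.ofReal (ε / 2) := by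
        refine sInf_le ⟨ε / 2, ⟨by positivity,
          (ENNReal.tsum_le_tsum fun k => ?_).trans hsum⟩, rfl⟩
        refine ENNReal.ofReal_le_ofReal (Real.rpow_le_rpow (by positivity) ?_ (hp k))
        rw [abs_one, div_le_div_iff₀ (by positivity) hl]
        calc |z k| * l ≤ ε / (2 * l) * l := by gcongr; exact hz k
          _ = 1 * (ε / 2) := by field_simp
    _ < ENNReal.ofReal ε := (ENNReal.ofReal_lt_ofReal_iff hε).2 (by linarith)

theorem forall_seqNorm_sub_lt_iff_mem_uniformClosure (hp : ∀ j, 0 < p j)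
    (hone : seqNorm p (fun _ => 1) < ⊤) (S : Submodule ℝ (ℕ → ℝ)) (x : ℕ → ℝ) :
    (∀ ε : ℝ, 0 < ε → ∃ y ∈ S, seqNorm p (fun k => x k - y k) < ENNReal.ofReal ε) ↔
      x ∈ S.uniformClosure := by
  constructor
  · intro h ε hε
    obtain ⟨y, hyS, hy⟩ := h ε hε
    exact ⟨y, hyS, fun k => (abs_lt_of_seqNorm_lt hp hy k).le⟩
  · intro hx ε hε
    obtain ⟨δ, hδ, hnorm⟩ := exists_seqNorm_lt_of_abs_le (fun j => (hp j).le) hone hε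
    obtain ⟨y, hyS, hy⟩ := hx δ hδ
    exact ⟨y, hyS, hnorm _ hy⟩

end SeqNorm

section NNSeq

variable {σ : ℝ → ℝ}

def nnSeqSubmodule (σ : ℝ → ℝ) : Submodule ℝ (ℕ → ℝ) where
  carrier := {y | IsNNSeq σ y}
  zero_mem' := ⟨0, Fin.elim0, Fin.elim0, Fin.elim0, fun k => by simp⟩
  add_mem' := by
    rintro y z ⟨M, α, w, b, hy⟩ ⟨M', α', w', b', hz⟩
    refine ⟨M + M', Fin.append α α', Fin.append w w', Fin.append b b', fun k => ?_⟩
    simp [Fin.sum_univ_add, hy k, hz k]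
  smul_mem' := by
    rintro c y ⟨M, α, w, b, hy⟩
    refine ⟨M, c • α, w, b, fun k => ?_⟩
    simp [hy k, Finset.mul_sum, mul_assoc]

theorem neuron_mem_nnSeqSubmodule (w b : ℝ) :
    (fun k : ℕ => σ (w * k + b)) ∈ nnSeqSubmodule σ :=
  ⟨1, fun _ => 1, fun _ => w, fun _ => b, fun k => by simp⟩

theorem const_mem_nnSeqSubmodule (hσ : ∃ s t : ℝ, σ s ≠ σ t) (c : ℝ) :
    (fun _ : ℕ => c) ∈ nnSeqSubmodule σ := by
  obtain ⟨s, t, hst⟩ := hσ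
  have hd : σ s - σ t ≠ 0 := sub_ne_zero.2 hst
  convert (nnSeqSubmodule σ).smul_mem (c / (σ s - σ t)) ((nnSeqSubmodule σ).sub_mem
    (neuron_mem_nnSeqSubmodule 0 s) (neuron_mem_nnSeqSubmodule 0 t)) using 1
  ext k
  simp only [Pi.smul_apply, Pi.sub_apply, zero_mul, zero_add, smul_eq_mul]
  field_simp

theorem exists_tendsto_neuron (hσ : Sigmoidal σ) (w b : ℝ) :
    ∃ L, Tendsto (fun k : ℕ => σ (w * k + b)) atTop (𝓝 L) := by
  obtain ⟨cp, cm, hcp, hcm⟩ := hσ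
  rcases lt_trichotomy w 0 with hw | rfl | hw
  · exact ⟨cm, hcm.comp (tendsto_atBot_add_const_right _ _
      (tendsto_natCast_atTop_atTop.const_mul_atTop_of_neg hw))⟩
  · exact ⟨σ b, by simp⟩
  · exact ⟨cp, hcp.comp (tendsto_atTop_add_const_right _ _
      (tendsto_natCast_atTop_atTop.const_mul_atTop hw))⟩

theorem IsNNSeq.exists_tendsto (hσ : Sigmoidal σ) {y : ℕ → ℝ} (hy : IsNNSeq σ y) :
    ∃ L, Tendsto y atTop (𝓝 L) := by
  obtain ⟨M, α, w, b, hy⟩ := hy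
  choose L hL using fun j => exists_tendsto_neuron hσ (w j) (b j)
  exact ⟨∑ j, α j * L j,
    (tendsto_finsetSum _ fun j _ => (hL j).const_mul (α j)).congr fun k => (hy k).symm⟩

/-- The uniform limit, as `w → ∞`, of the neurons `k ↦ σ (w (k - j) + b)`, where `s = σ b`. -/
def stepProfile (cm s cp : ℝ) (j k : ℕ) : ℝ :=
  if k < j then cm else if k = j then s else cp

theorem stepProfile_mem_uniformClosure {cm cp : ℝ} (hcm : Tendsto σ atBot (𝓝 cm))
    (hcp : Tendsto σ atTop (𝓝 cp)) (j : ℕ) (b : ℝ) :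
    stepProfile cm (σ b) cp j ∈ (nnSeqSubmodule σ).uniformClosure := by
  intro ε hε
  obtain ⟨T₁, hT₁⟩ := eventually_atBot.1 (hcm.eventually (Metric.closedBall_mem_nhds cm hε))
  obtain ⟨T₂, hT₂⟩ := eventually_atTop.1 (hcp.eventually (Metric.closedBall_mem_nhds cp hε))
  set w := |T₁| + |T₂| + |b| + 1
  have hw0 : 0 ≤ w := by positivity
  refine ⟨fun k => σ (w * k + (b - w * j)), neuron_mem_nnSeqSubmodule _ _, fun k => ?_⟩
  rcases lt_trichotomy k j with hk | rfl | hk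
  · have hkj : (k : ℝ) + 1 ≤ j := by exact_mod_cast hk
    have hstep : w * k + w ≤ w * j := by
      simpa [mul_add] using mul_le_mul_of_nonneg_left hkj hw0
    have harg : w * k + (b - w * j) ≤ T₁ := by
      linarith [neg_abs_le T₁, abs_nonneg T₂, le_abs_self b]
    simpa [stepProfile, hk, abs_sub_comm, Real.dist_eq] using hT₁ _ harg
  · simpa [stepProfile] using hε.le
  · have hkj : (j : ℝ) + 1 ≤ k := by exact_mod_cast hk
    have hstep : w * j + w ≤ w * k := by
      simpa [mul_add] using mul_le_mul_of_nonneg_left hkj hw0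
    have harg : T₂ ≤ w * k + (b - w * j) := by
      linarith [le_abs_self T₂, abs_nonneg T₁, neg_abs_le b]
    simpa [stepProfile, hk.not_gt, hk.ne', abs_sub_comm, Real.dist_eq] using hT₂ _ harg

theorem single_mem_uniformClosure (hσs : Sigmoidal σ) (hσ : ∃ s t : ℝ, σ s ≠ σ t) (j : ℕ) :
    Pi.single j 1 ∈ (nnSeqSubmodule σ).uniformClosure := by
  obtain ⟨cp, cm, hcp, hcm⟩ := hσs
  obtain ⟨s, t, hst⟩ := hσ
  have hd : σ s - σ t ≠ 0 := sub_ne_zero.2 hst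
  have hdiff : Pi.single j 1 = (σ s - σ t)⁻¹ •
      (stepProfile cm (σ s) cp j - stepProfile cm (σ t) cp j) := by
    ext k
    by_cases hk : k = j
    · subst hk; simp [stepProfile, hd]
    · simp [stepProfile, hk]
  rw [hdiff]
  exact Submodule.smul_mem _ _ (Submodule.sub_mem _
    (stepProfile_mem_uniformClosure hcm hcp j s) (stepProfile_mem_uniformClosure hcm hcp j t))

theorem mem_uniformClosure_of_tendsto (hσs : Sigmoidal σ) (hσ : ∃ s t : ℝ, σ s ≠ σ t)
    {x : ℕ → ℝ} {L : ℝ} (hx : Tendsto x atTop (𝓝 L)) :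
    x ∈ (nnSeqSubmodule σ).uniformClosure := by
  refine Submodule.mem_uniformClosure_of_forall_approx fun ε hε => ?_
  obtain ⟨N, hN⟩ := eventually_atTop.1 (hx.eventually (Metric.closedBall_mem_nhds L hε))
  have htrunc : (fun k => if k < N then x k else L) =
      (fun _ => L) + ∑ j ∈ Finset.range N, (x j - L) • Pi.single j 1 := by
    ext k
    by_cases hk : k < N <;> simp [Finset.sum_apply, Pi.single_apply, hk]
  refine ⟨_, htrunc ▸ Submodule.add_mem _
    (Submodule.le_uniformClosure (const_mem_nnSeqSubmodule hσ L))
    (Submodule.sum_mem _ fun j _ => Submodule.smul_mem _ _ (single_mem_uniformClosure hσs hσ j)),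
    fun k => ?_⟩
  by_cases hk : k < N
  · simpa [hk] using hε.le
  · simpa [hk, Real.dist_eq] using hN k (not_lt.1 hk)

theorem mem_uniformClosure_nnSeqSubmodule_iff (hσs : Sigmoidal σ) (hσ : ∃ s t : ℝ, σ s ≠ σ t)
    (x : ℕ → ℝ) : x ∈ (nnSeqSubmodule σ).uniformClosure ↔ ∃ L, Tendsto x atTop (𝓝 L) := by
  refine ⟨fun hx => exists_tendsto_of_forall_approx fun ε hε => ?_,
    fun ⟨L, hL⟩ => mem_uniformClosure_of_tendsto hσs hσ hL⟩
  obtain ⟨y, hy, hxy⟩ := hx ε hε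
  exact ⟨y, IsNNSeq.exists_tendsto hσs hy, hxy⟩

end NNSeq

theorem stmt14_general (p : ℕ → ℝ) (hp : ∀ j, 1 ≤ p j)
    (hone : seqNorm p (fun _ => 1) < ⊤)
    (σ : ℝ → ℝ)
    (hσs : Sigmoidal σ) (hσnc : ∃ s t : ℝ, σ s ≠ σ t) :
    ∀ x : ℕ → ℝ,
      ((∀ ε : ℝ, 0 < ε → ∃ y : ℕ → ℝ, IsNNSeq σ y ∧
          seqNorm p (fun k => x k - y k) < ENNReal.ofReal ε)
        ↔ ∃ L : ℝ, Tendsto x atTop (nhds L)) := fun x =>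
  (forall_seqNorm_sub_lt_iff_mem_uniformClosure (fun j => one_pos.trans_le (hp j)) hone
    (nnSeqSubmodule σ) x).trans (mem_uniformClosure_nnSeqSubmodule_iff hσs hσnc x)

/-- if `‖1_ℕ‖_{p(·)} < ∞` and `σ` is bounded, sigmoidal and non-constant,
then the closure of `H_σ` in the `‖·‖_{p(·)}` norm is exactly `c`, the space of convergent
sequences. -/
theorem stmt14 (p : ℕ → ℝ) (hp : ∀ j, 1 ≤ p j)
    (hone : seqNorm p (fun _ => 1) < ⊤)
    (σ : ℝ → ℝ) (hσb : ∃ B : ℝ, ∀ t : ℝ, |σ t| ≤ B)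
    (hσs : Sigmoidal σ) (hσnc : ∃ s t : ℝ, σ s ≠ σ t) :
    ∀ x : ℕ → ℝ,
      ((∀ ε : ℝ, 0 < ε → ∃ y : ℕ → ℝ, IsNNSeq σ y ∧
          seqNorm p (fun k => x k - y k) < ENNReal.ofReal ε)
        ↔ ∃ L : ℝ, Tendsto x atTop (nhds L)) :=
  stmt14_general p hp hone σ hσs hσnc
end

section
/- Let p : Ω → [1,∞) be an unbounded exponent function on Ω ⊆ ℝ^d. Then L^∞(Ω) ⊆ L^{p(·)}(Ω) if and only if w(Ω) := ‖[1_Ω]‖_Q < ∞, where ‖[f]‖_Q = inf{λ > 0 : ∫_Ω (|f(x)|/λ)^{p(x)} dx < ∞}. -/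
open MeasureTheory ENNReal

/-- The Luxemburg norm of the variable Lebesgue space `L^{p(·)}(Ω)`, valued in `ℝ≥0∞`. -/
noncomputable def luxNorm {d : ℕ} (Ω : Set (Fin d → ℝ)) (p f : (Fin d → ℝ) → ℝ) : ℝ≥0∞ :=
  sInf (ENNReal.ofReal '' {l : ℝ | 0 < l ∧
    ∫⁻ x in Ω, ENNReal.ofReal ((|f x| / l) ^ (p x)) ≤ 1})

/-- The quotient norm `‖[f]‖_Q = inf {λ > 0 : ∫_Ω (|f|/λ)^{p(x)} dx < ∞}`. -/
noncomputable def qNorm {d : ℕ} (Ω : Set (Fin d → ℝ)) (p f : (Fin d → ℝ) → ℝ) : ℝ≥0∞ :=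
  sInf (ENNReal.ofReal '' {l : ℝ | 0 < l ∧
    ∫⁻ x in Ω, ENNReal.ofReal ((|f x| / l) ^ (p x)) < ⊤})

/-! For `p ≥ 1` the modular `ρ(f/λ) = ∫ (|f|/λ)^p` decays at least like `1/t` under `λ ↦ tλ`
(`t ≥ 1`), so a modular that is finite at one scale is at most `1` at a larger one: `L^{p(·)}`
consists exactly of the functions with `‖[f]‖_Q < ∞`. A bounded `f` satisfies `|f| ≤ c · 1_Ω`, so
its modular at scale `cλ` is dominated by that of `1_Ω` at scale `λ`; conversely `1_Ω` is itself
bounded. -/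

theorem ENNReal.sInf_ofReal_image_lt_top_iff {S : Set ℝ} :
    sInf (ENNReal.ofReal '' S) < ⊤ ↔ S.Nonempty := by
  simp [sInf_lt_iff, Set.Nonempty]

theorem Real.rpow_div_mul_le {a l t q : ℝ} (ha : 0 ≤ a) (hl : 0 < l) (ht : 1 ≤ t) (hq : 1 ≤ q) :
    (a / (t * l)) ^ q ≤ t⁻¹ * (a / l) ^ q := by
  have ht₀ : 0 < t := one_pos.trans_le ht
  calc (a / (t * l)) ^ q = t⁻¹ ^ q * (a / l) ^ q := by
        rw [← Real.mul_rpow (by positivity) (by positivity), div_mul_eq_div_div_swap,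
          div_eq_inv_mul (a / l)]
    _ ≤ t⁻¹ * (a / l) ^ q := by
        gcongr
        exact Real.rpow_le_self_of_le_one (by positivity) (inv_le_one_of_one_le₀ ht) hq

noncomputable def modular {α : Type*} [MeasurableSpace α] (μ : Measure α) (p f : α → ℝ) (l : ℝ) :
    ℝ≥0∞ :=
  ∫⁻ x, ENNReal.ofReal ((|f x| / l) ^ p x) ∂μ

section Modular

variable {α : Type*} [MeasurableSpace α] {μ : Measure α} {p f g : α → ℝ} {l : ℝ}

theorem modular_mul_le_of_ae_abs_le {c : ℝ} (hp : ∀ᵐ x ∂μ, 0 ≤ p x) (hc : 0 < c) (hl : 0 < l)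
    (hfg : ∀ᵐ x ∂μ, |f x| ≤ c * |g x|) :
    modular μ p f (c * l) ≤ modular μ p g l := by
  refine lintegral_mono_ae ?_
  filter_upwards [hp, hfg] with x hpx hx
  refine ENNReal.ofReal_le_ofReal (Real.rpow_le_rpow (by positivity) ?_ hpx)
  rw [div_le_div_iff₀ (by positivity) hl]
  linarith [mul_le_mul_of_nonneg_right hx hl.le]

theorem modular_mul_le (hp : ∀ᵐ x ∂μ, 1 ≤ p x) (hl : 0 < l) {t : ℝ} (ht : 1 ≤ t) :
    modular μ p f (t * l) ≤ ENNReal.ofReal t⁻¹ * modular μ p f l := by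
  rw [modular, modular, ← lintegral_const_mul' _ _ ofReal_ne_top]
  refine lintegral_mono_ae ?_
  filter_upwards [hp] with x hpx
  rw [← ENNReal.ofReal_mul (by positivity)]
  exact ENNReal.ofReal_le_ofReal (Real.rpow_div_mul_le (abs_nonneg _) hl ht hpx)

theorem exists_modular_le_one_of_lt_top (hp : ∀ᵐ x ∂μ, 1 ≤ p x) (hl : 0 < l)
    (hf : modular μ p f l < ⊤) :
    ∃ l' > 0, modular μ p f l' ≤ 1 := by
  set t := max (modular μ p f l).toReal 1
  have ht : 1 ≤ t := le_max_right _ _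
  have ht₀ : 0 < t := one_pos.trans_le ht
  refine ⟨t * l, by positivity, ?_⟩
  calc modular μ p f (t * l) ≤ ENNReal.ofReal t⁻¹ * modular μ p f l := modular_mul_le hp hl ht
    _ ≤ ENNReal.ofReal t⁻¹ * ENNReal.ofReal t := by
        gcongr
        rw [← ofReal_toReal hf.ne]
        exact ofReal_le_ofReal (le_max_left _ _)
    _ = 1 := by rw [← ENNReal.ofReal_mul (by positivity), inv_mul_cancel₀ ht₀.ne', ofReal_one]

end Modular

section VariableLebesgue

variable {d : ℕ} {Ω : Set (Fin d → ℝ)} {p f : (Fin d → ℝ) → ℝ}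

theorem luxNorm_lt_top_iff :
    luxNorm Ω p f < ⊤ ↔ ∃ l > 0, modular (volume.restrict Ω) p f l ≤ 1 :=
  ENNReal.sInf_ofReal_image_lt_top_iff

theorem qNorm_lt_top_iff :
    qNorm Ω p f < ⊤ ↔ ∃ l > 0, modular (volume.restrict Ω) p f l < ⊤ :=
  ENNReal.sInf_ofReal_image_lt_top_iff

theorem luxNorm_lt_top_iff_qNorm_lt_top (hp : ∀ᵐ x ∂(volume.restrict Ω), 1 ≤ p x) :
    luxNorm Ω p f < ⊤ ↔ qNorm Ω p f < ⊤ := by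
  rw [luxNorm_lt_top_iff, qNorm_lt_top_iff]
  constructor
  · rintro ⟨l, hl, hf⟩
    exact ⟨l, hl, hf.trans_lt one_lt_top⟩
  · rintro ⟨l, hl, hf⟩
    exact exists_modular_le_one_of_lt_top hp hl hf

end VariableLebesgue

theorem stmt15_general {d : ℕ} (Ω : Set (Fin d → ℝ)) (p : (Fin d → ℝ) → ℝ)
    (hpm : Measurable p) (hp1 : ∀ x ∈ Ω, 1 ≤ p x) :
    (∀ f : (Fin d → ℝ) → ℝ, Measurable f →
        (∃ C : ℝ, ∀ᵐ x ∂(volume.restrict Ω), |f x| ≤ C) → luxNorm Ω p f < ⊤)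
      ↔ qNorm Ω p (fun _ => 1) < ⊤ := by
  -- `Ω` need not be measurable, but `{x | 1 ≤ p x}` is.
  have hp : ∀ᵐ x ∂(volume.restrict Ω), 1 ≤ p x :=
    (ae_restrict_iff (measurableSet_le measurable_const hpm)).2 (ae_of_all _ hp1)
  refine ⟨fun h => (luxNorm_lt_top_iff_qNorm_lt_top hp).1 (h _ measurable_const ⟨1, by simp⟩),
    fun hq f _ ⟨C, hC⟩ => ?_⟩
  obtain ⟨l, hl, hmod⟩ := qNorm_lt_top_iff.1 hq
  have hc : 0 < max C 1 := one_pos.trans_le (le_max_right _ _)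
  have hf : ∀ᵐ x ∂(volume.restrict Ω), |f x| ≤ max C 1 * |(1 : ℝ)| := by
    filter_upwards [hC] with x hx
    simpa using hx.trans (le_max_left _ _)
  have hp₀ : ∀ᵐ x ∂(volume.restrict Ω), 0 ≤ p x := hp.mono fun x hx => zero_le_one.trans hx
  exact luxNorm_lt_top_iff.2 <| exists_modular_le_one_of_lt_top hp (by positivity) <|
    (modular_mul_le_of_ae_abs_le hp₀ hc hl hf).trans_lt hmod

/-- for an unbounded exponent `p` on `Ω ⊆ ℝ^d`,
`L^∞(Ω) ⊆ L^{p(·)}(Ω)` if and only if `w(Ω) = ‖[1_Ω]‖_Q < ∞`. -/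
theorem stmt15 {d : ℕ} (Ω : Set (Fin d → ℝ)) (p : (Fin d → ℝ) → ℝ)
    (hpm : Measurable p) (hp1 : ∀ x ∈ Ω, 1 ≤ p x)
    (hpunb : essSup (fun x => ENNReal.ofReal (p x)) (volume.restrict Ω) = ⊤) :
    (∀ f : (Fin d → ℝ) → ℝ, Measurable f →
        (∃ C : ℝ, ∀ᵐ x ∂(volume.restrict Ω), |f x| ≤ C) → luxNorm Ω p f < ⊤)
      ↔ qNorm Ω p (fun _ => 1) < ⊤ :=
  stmt15_general Ω p hpm hp1
end

section
/- Let Ω = [1,∞), let p : Ω → [1,∞) be an unbounded exponent function, bounded on every compact subset, with L^∞(Ω) ⊂ L^{p(·)}(Ω). Let σ : ℝ → ℝ be bounded, sigmoidal, non-constant. If f ∈ L^{p(·)}(Ω) satisfies: for every ε > 0 there is g_ε(x) = Σ_{j=1}^n α_j σ(w_j x + b_j) with ‖f − g_ε‖_{L^{p(·)}(Ω)} < ε, then there exists β ∈ ℝ such that ‖[f − β·1_Ω]‖_Q = 0, where ‖[h]‖_Q = inf{λ > 0 : ∫_Ω (|h(x)|/λ)^{p(x)} dx < ∞}. -/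
/-! Write `ρ(h, l) = ∫_{[1,∞)} (|h| / l)^{p(x)} dx`. Every network `g` has a limit `β_g` at `+∞`.
If `ρ(f - g, l) ≤ 1`, then on a tail `|f - β_g| < l + δ` outside a set of measure at most `1`; as
every tail of `[1, ∞)` has infinite measure, two such limits satisfy `|β₁ - β₂| ≤ l₁ + l₂`, so
they converge to some `β`. For `λ > 0`, split `[1, ∞) = [1, R] ∪ (R, ∞)`: on `[1, R]` the
exponent is bounded, so the modular of `f - β` is finite at every scale; on `(R, ∞)` a network
`g` with `g ≈ β` there gives `(|f - β| / λ)^p ≤ (|f - g| / l)^p + (1 / l₀)^p`, where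
`ρ(1, l₀) < ∞` because `1 ∈ L^∞`. -/

open MeasureTheory ENNReal Filter

/-- The Luxemburg norm of the variable Lebesgue space `L^{p(·)}(Ω)`, `Ω ⊆ ℝ`. -/
noncomputable def luxNormR (Ω : Set ℝ) (p f : ℝ → ℝ) : ℝ≥0∞ :=
  sInf (ENNReal.ofReal '' {l : ℝ | 0 < l ∧
    ∫⁻ x in Ω, ENNReal.ofReal ((|f x| / l) ^ (p x)) ≤ 1})

/-- The quotient norm `‖[f]‖_Q = inf {λ > 0 : ∫_Ω (|f|/λ)^{p(x)} dx < ∞}`. -/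
noncomputable def qNormR (Ω : Set ℝ) (p f : ℝ → ℝ) : ℝ≥0∞ :=
  sInf (ENNReal.ofReal '' {l : ℝ | 0 < l ∧
    ∫⁻ x in Ω, ENNReal.ofReal ((|f x| / l) ^ (p x)) < ⊤})

/-- A one-dimensional shallow neural network with activation function `σ`. -/
def IsNN1 (σ g : ℝ → ℝ) : Prop :=
  ∃ (M : ℕ) (α w b : Fin M → ℝ), ∀ x : ℝ, g x = ∑ j, α j * σ (w j * x + b j)

open Set Topology

/-- The modular `ρ(h, l)`: `luxNormR` and `qNormR` unfold to infima over its sublevel sets. -/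
noncomputable def modularR (Ω : Set ℝ) (p h : ℝ → ℝ) (l : ℝ) : ℝ≥0∞ :=
  ∫⁻ x in Ω, ENNReal.ofReal ((|h x| / l) ^ (p x))

lemma modularR_mono_set {S T : Set ℝ} {p h : ℝ → ℝ} {l : ℝ} (hST : S ⊆ T) :
    modularR S p h l ≤ modularR T p h l :=
  lintegral_mono_set hST

lemma exists_modularR_le_one_of_luxNormR_lt {Ω : Set ℝ} {p h : ℝ → ℝ} {C : ℝ≥0∞}
    (hC : luxNormR Ω p h < C) :
    ∃ l : ℝ, 0 < l ∧ ENNReal.ofReal l < C ∧ modularR Ω p h l ≤ 1 := by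
  obtain ⟨_, ⟨l, ⟨hl, hm⟩, rfl⟩, hlC⟩ := sInf_lt_iff.mp hC
  exact ⟨l, hl, hlC, hm⟩

lemma qNormR_eq_zero_of_modularR_lt_top {Ω : Set ℝ} {p h : ℝ → ℝ}
    (hh : ∀ l : ℝ, 0 < l → modularR Ω p h l < ⊤) : qNormR Ω p h = 0 := by
  refine sInf_eq_bot.2 fun b hb => ?_
  obtain ⟨l, -, hl0, hlb⟩ := ENNReal.lt_iff_exists_real_btwn.1 hb
  have hl : 0 < l := ENNReal.ofReal_pos.1 hl0
  exact ⟨_, ⟨l, ⟨hl, hh l hl⟩, rfl⟩, hlb⟩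

lemma IsNN1.exists_tendsto_atTop {σ g : ℝ → ℝ} (hσ : Sigmoidal σ) (hg : IsNN1 σ g) :
    ∃ β : ℝ, Tendsto g atTop (𝓝 β) := by
  obtain ⟨cp, cm, hcp, hcm⟩ := hσ
  obtain ⟨M, α, w, b, rfl⟩ : ∃ (M : ℕ) (α w b : Fin M → ℝ),
      g = fun x => ∑ j, α j * σ (w j * x + b j) := by
    obtain ⟨M, α, w, b, hg⟩ := hg
    exact ⟨M, α, w, b, funext hg⟩
  have hneuron : ∀ j, ∃ c : ℝ, Tendsto (fun x => σ (w j * x + b j)) atTop (𝓝 c) := by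
    intro j
    rcases lt_trichotomy (w j) 0 with hw | hw | hw
    · exact ⟨cm, hcm.comp (tendsto_atBot_add_const_right _ _
        ((tendsto_const_mul_atBot_of_neg hw).2 tendsto_id))⟩
    · exact ⟨σ (b j), by simp only [hw, zero_mul, zero_add, tendsto_const_nhds]⟩
    · exact ⟨cp, hcp.comp (tendsto_atTop_add_const_right _ _
        ((tendsto_const_mul_atTop_of_pos hw).2 tendsto_id))⟩
  choose c hc using hneuron
  exact ⟨_, tendsto_finsetSum _ fun j _ => (hc j).const_mul (α j)⟩

lemma exists_forall_abs_sub_le {b L : ℕ → ℝ} (hL : Tendsto L atTop (𝓝 0))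
    (hb : ∀ n m, |b n - b m| ≤ L n + L m) : ∃ β : ℝ, ∀ n, |b n - β| ≤ L n := by
  have hcauchy : CauchySeq b := by
    refine Metric.cauchySeq_iff'.2 fun ε hε => ?_
    obtain ⟨N, hN⟩ := eventually_atTop.1 (hL.eventually (gt_mem_nhds (half_pos hε)))
    refine ⟨N, fun n hn => ?_⟩
    rw [Real.dist_eq]
    linarith [hb n N, hN n hn, hN N le_rfl]
  obtain ⟨β, hβ⟩ := cauchySeq_tendsto_of_complete hcauchy
  refine ⟨β, fun n => ?_⟩
  have h := le_of_tendsto_of_tendsto' (tendsto_const_nhds.sub hβ).abs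
    (tendsto_const_nhds.add hL) (hb n)
  rwa [add_zero] at h

lemma rpow_le_max_one_rpow {a q B : ℝ} (ha : 0 ≤ a) (hq : 0 ≤ q) (hqB : q ≤ B) :
    a ^ q ≤ max 1 a ^ B :=
  (Real.rpow_le_rpow ha (le_max_right _ _) hq).trans
    (Real.rpow_le_rpow_of_exponent_le (le_max_left _ _) hqB)

lemma rpow_div_le_mul_rpow_div {a l m q B : ℝ} (ha : 0 ≤ a) (hl : 0 < l) (hm : 0 < m)
    (hq : 0 ≤ q) (hqB : q ≤ B) : (a / m) ^ q ≤ max 1 (l / m) ^ B * (a / l) ^ q := by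
  have hsplit : a / m = l / m * (a / l) := by field_simp
  rw [hsplit, Real.mul_rpow (by positivity) (by positivity)]
  exact mul_le_mul_of_nonneg_right (rpow_le_max_one_rpow (by positivity) hq hqB)
    (by positivity)

lemma rpow_abs_add_div_le {a b lam q : ℝ} (hlam : 0 < lam) (hq : 0 ≤ q) :
    (|a + b| / lam) ^ q ≤ (|a| / (lam / 2)) ^ q + (|b| / (lam / 2)) ^ q := by
  have htri := abs_add_le a b
  rcases le_total |a| |b| with hab | hab
  · refine (Real.rpow_le_rpow (by positivity) ?_ hq).trans
      (le_add_of_nonneg_left (by positivity))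
    rw [div_div_eq_mul_div, div_le_div_iff_of_pos_right hlam]
    linarith
  · refine (Real.rpow_le_rpow (by positivity) ?_ hq).trans
      (le_add_of_nonneg_right (by positivity))
    rw [div_div_eq_mul_div, div_le_div_iff_of_pos_right hlam]
    linarith

/-- Chebyshev's inequality for the modular. -/
lemma measure_inter_setOf_le_abs_sub_le_one {Ω S : Set ℝ} {p f g : ℝ → ℝ} {β l δ : ℝ}
    (hΩ : MeasurableSet Ω) (hS : MeasurableSet S) (hfm : Measurable f)
    (hp : ∀ x ∈ Ω, 0 ≤ p x) (hl : 0 < l) (hg : ∀ x ∈ S, |g x - β| ≤ δ)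
    (hm : modularR Ω p (fun x => f x - g x) l ≤ 1) :
    volume.restrict Ω (S ∩ {x | l + δ ≤ |f x - β|}) ≤ 1 := by
  set A := S ∩ {x | l + δ ≤ |f x - β|}
  have hA : MeasurableSet A :=
    hS.inter (measurableSet_le measurable_const (hfm.sub measurable_const).abs)
  have hpt : ∀ x ∈ Ω, A.indicator 1 x ≤ ENNReal.ofReal ((|f x - g x| / l) ^ (p x)) := by
    intro x hxΩ
    by_cases hxA : x ∈ A
    · have htri : |f x - β| ≤ |f x - g x| + |g x - β| := abs_sub_le _ _ _
      have hlev : l + δ ≤ |f x - β| := hxA.2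
      have hle : 1 ≤ |f x - g x| / l := by
        rw [one_le_div hl]
        linarith [hg x hxA.1]
      simpa [hxA] using Real.one_le_rpow hle (hp x hxΩ)
    · simp [hxA]
  calc volume.restrict Ω A = ∫⁻ x in Ω, A.indicator 1 x := (lintegral_indicator_one hA).symm
    _ ≤ modularR Ω p (fun x => f x - g x) l := setLIntegral_mono' hΩ hpt
    _ ≤ 1 := hm

lemma abs_sub_le_of_modularR_le_one {p f g₁ g₂ : ℝ → ℝ} {β₁ β₂ l₁ l₂ : ℝ}
    (hfm : Measurable f) (hp : ∀ x ∈ Ici (1 : ℝ), 0 ≤ p x) (hl₁ : 0 < l₁) (hl₂ : 0 < l₂)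
    (hg₁ : Tendsto g₁ atTop (𝓝 β₁)) (hg₂ : Tendsto g₂ atTop (𝓝 β₂))
    (hm₁ : modularR (Ici 1) p (fun x => f x - g₁ x) l₁ ≤ 1)
    (hm₂ : modularR (Ici 1) p (fun x => f x - g₂ x) l₂ ≤ 1) :
    |β₁ - β₂| ≤ l₁ + l₂ := by
  refine le_of_forall_pos_le_add fun ε hε => ?_
  have hδ : 0 < ε / 2 := half_pos hε
  have hnear : ∀ {g : ℝ → ℝ} {β : ℝ}, Tendsto g atTop (𝓝 β) →
      ∀ᶠ x in atTop, |g x - β| ≤ ε / 2 := fun hg =>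
    (Metric.tendsto_nhds.1 hg _ hδ).mono fun x hx => (Real.dist_eq _ _ ▸ hx).le
  obtain ⟨R, hR⟩ := eventually_atTop.1
    ((hnear hg₁).and ((hnear hg₂).and (eventually_ge_atTop 1)))
  have hR1 : 1 ≤ R := (hR R le_rfl).2.2
  have htail : volume.restrict (Ici 1) (Ioi R) = ⊤ := by
    rw [Measure.restrict_apply measurableSet_Ioi,
      inter_eq_left.2 (Ioi_subset_Ici hR1), Real.volume_Ioi]
  have hnot_cover : ¬ Ioi R ⊆ (Ioi R ∩ {x | l₁ + ε / 2 ≤ |f x - β₁|}) ∪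
      (Ioi R ∩ {x | l₂ + ε / 2 ≤ |f x - β₂|}) := by
    intro hcover
    have h := (measure_mono hcover).trans ((measure_union_le _ _).trans (add_le_add
      (measure_inter_setOf_le_abs_sub_le_one measurableSet_Ici measurableSet_Ioi hfm hp hl₁
        (fun x hx => (hR x (le_of_lt hx)).1) hm₁)
      (measure_inter_setOf_le_abs_sub_le_one measurableSet_Ici measurableSet_Ioi hfm hp hl₂
        (fun x hx => (hR x (le_of_lt hx)).2.1) hm₂)))
    rw [htail] at h
    exact absurd h (by norm_num)
  obtain ⟨x, hxR, hx⟩ := not_subset.1 hnot_cover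
  have h₁ : |f x - β₁| < l₁ + ε / 2 := not_le.1 fun h => hx (Or.inl ⟨hxR, h⟩)
  have h₂ : |f x - β₂| < l₂ + ε / 2 := not_le.1 fun h => hx (Or.inr ⟨hxR, h⟩)
  linarith [abs_sub_le β₁ (f x) β₂, abs_sub_comm β₁ (f x)]

lemma modularR_sub_const_lt_top {K : Set ℝ} {p f : ℝ → ℝ} {B l lam : ℝ} (c : ℝ)
    (hK : MeasurableSet K) (hKfin : volume K ≠ ⊤) (hp : ∀ x ∈ K, 0 ≤ p x ∧ p x ≤ B)
    (hl : 0 < l) (hlam : 0 < lam) (hf : modularR K p f l < ⊤) :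
    modularR K p (fun x => f x - c) lam < ⊤ := by
  set C₁ := max 1 (l / (lam / 2)) ^ B
  set C₂ := max 1 (|c| / (lam / 2)) ^ B
  have hpt : ∀ x ∈ K, ENNReal.ofReal ((|f x - c| / lam) ^ (p x)) ≤
      ENNReal.ofReal C₁ * ENNReal.ofReal ((|f x| / l) ^ (p x)) + ENNReal.ofReal C₂ := by
    intro x hx
    obtain ⟨hp0, hpB⟩ := hp x hx
    rw [← ENNReal.ofReal_mul (by positivity), ← ENNReal.ofReal_add (by positivity)
      (by positivity)]
    refine ENNReal.ofReal_le_ofReal ?_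
    calc (|f x - c| / lam) ^ (p x)
        ≤ (|f x| / (lam / 2)) ^ (p x) + (|-c| / (lam / 2)) ^ (p x) :=
          rpow_abs_add_div_le hlam hp0
      _ ≤ C₁ * (|f x| / l) ^ (p x) + C₂ := by
          rw [abs_neg]
          exact add_le_add
            (rpow_div_le_mul_rpow_div (abs_nonneg _) hl (by positivity) hp0 hpB)
            (rpow_le_max_one_rpow (by positivity) hp0 hpB)
  calc modularR K p (fun x => f x - c) lam
      ≤ ∫⁻ x in K, (ENNReal.ofReal C₁ * ENNReal.ofReal ((|f x| / l) ^ (p x)) +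
          ENNReal.ofReal C₂) := setLIntegral_mono' hK hpt
    _ = ENNReal.ofReal C₁ * modularR K p f l + ENNReal.ofReal C₂ * volume K := by
      rw [lintegral_add_right _ measurable_const, lintegral_const_mul' _ _ ENNReal.ofReal_ne_top,
        setLIntegral_const]
      rfl
    _ < ⊤ := by finiteness

lemma modularR_sub_le_add {S : Set ℝ} {p f g : ℝ → ℝ} {β l l₀ lam : ℝ}
    (hS : MeasurableSet S) (hpm : Measurable p) (hp : ∀ x ∈ S, 0 ≤ p x) (hl : 0 < l)
    (hl₀ : 0 < l₀) (hllam : 2 * l ≤ lam) (hg : ∀ x ∈ S, 2 * l₀ * |g x - β| ≤ lam) :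
    modularR S p (fun x => f x - β) lam ≤
      modularR S p (fun x => f x - g x) l + modularR S p (fun _ => 1) l₀ := by
  have hlam : 0 < lam := by linarith
  have hpt : ∀ x ∈ S, ENNReal.ofReal ((|f x - β| / lam) ^ (p x)) ≤
      ENNReal.ofReal ((|f x - g x| / l) ^ (p x)) + ENNReal.ofReal ((|1| / l₀) ^ (p x)) := by
    intro x hx
    rw [← ENNReal.ofReal_add (by positivity) (by positivity)]
    refine ENNReal.ofReal_le_ofReal ?_
    have hfg : |f x - g x| / (lam / 2) ≤ |f x - g x| / l :=
      div_le_div_of_nonneg_left (abs_nonneg _) hl (by linarith)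
    have hgβ : |g x - β| / (lam / 2) ≤ |1| / l₀ := by
      rw [abs_one, div_le_div_iff₀ (by positivity) hl₀]
      linarith [hg x hx]
    calc (|f x - β| / lam) ^ (p x)
        = (|(f x - g x) + (g x - β)| / lam) ^ (p x) := by rw [sub_add_sub_cancel]
      _ ≤ (|f x - g x| / (lam / 2)) ^ (p x) + (|g x - β| / (lam / 2)) ^ (p x) :=
          rpow_abs_add_div_le hlam (hp x hx)
      _ ≤ (|f x - g x| / l) ^ (p x) + (|1| / l₀) ^ (p x) :=
          add_le_add (Real.rpow_le_rpow (by positivity) hfg (hp x hx))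
            (Real.rpow_le_rpow (by positivity) hgβ (hp x hx))
  calc modularR S p (fun x => f x - β) lam
      ≤ ∫⁻ x in S, (ENNReal.ofReal ((|f x - g x| / l) ^ (p x)) +
          ENNReal.ofReal ((|1| / l₀) ^ (p x))) := setLIntegral_mono' hS hpt
    _ = _ := lintegral_add_right' _ (by fun_prop)

lemma modularR_Ici_sub_const_lt_top {p f : ℝ → ℝ} {β l₀ l_f lam : ℝ} (hpm : Measurable p)
    (hp : ∀ x ∈ Ici (1 : ℝ), 0 ≤ p x)
    (hploc : ∀ K : Set ℝ, K ⊆ Ici (1 : ℝ) → IsCompact K → ∃ B : ℝ, ∀ x ∈ K, p x ≤ B)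
    (hl₀ : 0 < l₀) (h₁ : modularR (Ici 1) p (fun _ => 1) l₀ < ⊤)
    (hl_f : 0 < l_f) (hf : modularR (Ici 1) p f l_f < ⊤)
    (happrox : ∀ ε : ℝ, 0 < ε → ∃ (g : ℝ → ℝ) (l : ℝ), 0 < l ∧ l ≤ ε ∧
      (∀ᶠ x in atTop, |g x - β| ≤ ε) ∧ modularR (Ici 1) p (fun x => f x - g x) l < ⊤)
    (hlam : 0 < lam) : modularR (Ici 1) p (fun x => f x - β) lam < ⊤ := by
  obtain ⟨g, l, hl, hlε, hg, hfg⟩ := happrox (min (lam / 2) (lam / (2 * l₀))) (by positivity)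
  obtain ⟨R, hR⟩ := eventually_atTop.1 (hg.and (eventually_ge_atTop 1))
  have hR1 : 1 ≤ R := (hR R le_rfl).2
  obtain ⟨B, hB⟩ := hploc (Icc 1 R) (fun x hx => hx.1) isCompact_Icc
  have hhead : modularR (Icc 1 R) p (fun x => f x - β) lam < ⊤ :=
    modularR_sub_const_lt_top β measurableSet_Icc (by simp) (fun x hx => ⟨hp x hx.1, hB x hx⟩)
      hl_f hlam ((modularR_mono_set Icc_subset_Ici_self).trans_lt hf)
  have hsub : Ioi R ⊆ Ici 1 := Ioi_subset_Ici hR1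
  have htail : modularR (Ioi R) p (fun x => f x - β) lam < ⊤ := by
    refine (modularR_sub_le_add measurableSet_Ioi hpm (fun x hx => hp x (hsub hx)) hl hl₀
      ?_ fun x hx => ?_).trans_lt (ENNReal.add_lt_top.2
        ⟨(modularR_mono_set hsub).trans_lt hfg, (modularR_mono_set hsub).trans_lt h₁⟩)
    · linarith [hlε.trans (min_le_left _ _)]
    · have hgx : |g x - β| ≤ lam / (2 * l₀) := (hR x (le_of_lt hx)).1.trans (min_le_right _ _)
      rw [le_div_iff₀ (by positivity)] at hgx
      linarith
  rw [modularR, ← Icc_union_Ioi_eq_Ici hR1]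
  exact (lintegral_union_le _ _ _).trans_lt (ENNReal.add_lt_top.2 ⟨hhead, htail⟩)

theorem stmt17_general (p : ℝ → ℝ) (hpm : Measurable p)
    (hp1 : ∀ x ∈ Set.Ici (1 : ℝ), 1 ≤ p x)
    (hploc : ∀ K : Set ℝ, K ⊆ Set.Ici (1 : ℝ) → IsCompact K → ∃ B : ℝ, ∀ x ∈ K, p x ≤ B)
    (hinc : ∀ f : ℝ → ℝ, Measurable f →
      (∃ C : ℝ, ∀ x ∈ Set.Ici (1 : ℝ), |f x| ≤ C) → luxNormR (Set.Ici 1) p f < ⊤)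
    (σ : ℝ → ℝ)
    (hσs : Sigmoidal σ)
    (f : ℝ → ℝ) (hfm : Measurable f) (hfp : luxNormR (Set.Ici 1) p f < ⊤)
    (happrox : ∀ ε : ℝ, 0 < ε → ∃ g : ℝ → ℝ, IsNN1 σ g ∧
      luxNormR (Set.Ici 1) p (fun x => f x - g x) < ENNReal.ofReal ε) :
    ∃ β : ℝ, qNormR (Set.Ici 1) p (fun x => f x - β) = 0 := by
  have hp : ∀ x ∈ Ici (1 : ℝ), 0 ≤ p x := fun x hx => zero_le_one.trans (hp1 x hx)
  obtain ⟨l₀, hl₀, -, h₁⟩ := exists_modularR_le_one_of_luxNormR_lt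
    (hinc (fun _ => 1) measurable_const ⟨1, fun _ _ => abs_one.le⟩)
  obtain ⟨l_f, hl_f, -, hf⟩ := exists_modularR_le_one_of_luxNormR_lt hfp
  have hseq : ∀ n : ℕ, ∃ (g : ℝ → ℝ) (b l : ℝ), Tendsto g atTop (𝓝 b) ∧ 0 < l ∧
      l < 1 / (n + 1) ∧ modularR (Ici 1) p (fun x => f x - g x) l ≤ 1 := by
    intro n
    obtain ⟨g, hgNN, hg⟩ := happrox (1 / (n + 1)) (by positivity)
    obtain ⟨l, hl, hln, hm⟩ := exists_modularR_le_one_of_luxNormR_lt hg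
    obtain ⟨b, hb⟩ := hgNN.exists_tendsto_atTop hσs
    exact ⟨g, b, l, hb, hl, (ENNReal.ofReal_lt_ofReal_iff (by positivity)).1 hln, hm⟩
  choose G b L hG hL hLn hGm using hseq
  have hL0 : Tendsto L atTop (𝓝 0) := squeeze_zero (fun n => (hL n).le) (fun n => (hLn n).le)
    tendsto_one_div_add_atTop_nhds_zero_nat
  obtain ⟨β, hβ⟩ := exists_forall_abs_sub_le hL0 fun n m =>
    abs_sub_le_of_modularR_le_one hfm hp (hL n) (hL m) (hG n) (hG m) (hGm n) (hGm m)
  refine ⟨β, qNormR_eq_zero_of_modularR_lt_top fun lam hlam =>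
    modularR_Ici_sub_const_lt_top hpm hp hploc hl₀ (h₁.trans_lt one_lt_top) hl_f
      (hf.trans_lt one_lt_top) (fun ε hε => ?_) hlam⟩
  obtain ⟨n, hn⟩ := (hL0.eventually (gt_mem_nhds (half_pos hε))).exists
  have hGn : ∀ᶠ x in atTop, |G n x - b n| < ε / 2 := by
    simpa only [Real.dist_eq] using Metric.tendsto_nhds.1 (hG n) _ (half_pos hε)
  refine ⟨G n, L n, hL n, by linarith, hGn.mono fun x hx => ?_, (hGm n).trans_lt one_lt_top⟩
  linarith [abs_sub_le (G n x) (b n) β, hβ n]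

/-- on `Ω = [1,∞)` with an unbounded exponent `p` (bounded on compacts,
`L^∞(Ω) ⊂ L^{p(·)}(Ω)`) and `σ` bounded, sigmoidal, non-constant: if
`f ∈ L^{p(·)}(Ω)` can be approximated arbitrarily well by shallow networks in
`L^{p(·)}(Ω)`-norm, then there is `β ∈ ℝ` with `‖[f − β·1_Ω]‖_Q = 0`. -/
theorem stmt17 (p : ℝ → ℝ) (hpm : Measurable p)
    (hp1 : ∀ x ∈ Set.Ici (1 : ℝ), 1 ≤ p x)
    (hpunb : essSup (fun x => ENNReal.ofReal (p x))
      (volume.restrict (Set.Ici (1 : ℝ))) = ⊤)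
    (hploc : ∀ K : Set ℝ, K ⊆ Set.Ici (1 : ℝ) → IsCompact K → ∃ B : ℝ, ∀ x ∈ K, p x ≤ B)
    (hinc : ∀ f : ℝ → ℝ, Measurable f →
      (∃ C : ℝ, ∀ x ∈ Set.Ici (1 : ℝ), |f x| ≤ C) → luxNormR (Set.Ici 1) p f < ⊤)
    (σ : ℝ → ℝ) (hσb : ∃ B : ℝ, ∀ t : ℝ, |σ t| ≤ B)
    (hσs : Sigmoidal σ) (hσnc : ∃ s t : ℝ, σ s ≠ σ t)
    (f : ℝ → ℝ) (hfm : Measurable f) (hfp : luxNormR (Set.Ici 1) p f < ⊤)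
    (happrox : ∀ ε : ℝ, 0 < ε → ∃ g : ℝ → ℝ, IsNN1 σ g ∧
      luxNormR (Set.Ici 1) p (fun x => f x - g x) < ENNReal.ofReal ε) :
    ∃ β : ℝ, qNormR (Set.Ici 1) p (fun x => f x - β) = 0 :=
  stmt17_general p hpm hp1 hploc hinc σ hσs f hfm hfp happrox
end
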